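/- arXiv:1811.02241 — 4 statements merged into one kernel-verified Lean document; each statement's English description precedes it below -/
import Mathlib

section
/- Let p be a prime number, G a Hausdorff topological group, and x ∈ G a topologically unipotent element (x^(p^n) → 1 as n → ∞) such that the closure of the cyclic subgroup generated by x is compact. Let J be a closed subgroup of G and c ≥ 1 an integer coprime to p such that x^c ∈ J. Then x ∈ J. -/
open Filter Topology

/-- `x` is the limit of `x ^ (1 - a i)`, and each `1 - a i` is a multiple of `c`. -/
theorem Subgroup.mem_of_tendsto_zpow_of_dvd_sub_one {G : Type*} [Group G] [TopologicalSpace G]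
    [IsTopologicalGroup G] {J : Subgroup G} (hJ : IsClosed (J : Set G)) {x : G} {c : ℤ}
    (hxc : x ^ c ∈ J) {ι : Type*} {l : Filter ι} [l.NeBot] {a : ι → ℤ}
    (ha : ∀ i, c ∣ a i - 1) (hlim : Tendsto (fun i => x ^ a i) l (𝓝 1)) : x ∈ J := by
  have hmem : ∀ i, x ^ (1 - a i) ∈ J := fun i => by
    obtain ⟨k, hk⟩ := ha i
    rw [show 1 - a i = c * -k by rw [mul_neg, ← hk]; ring, zpow_mul]
    exact J.zpow_mem hxc _
  have htend : Tendsto (fun i => x ^ (1 - a i)) l (𝓝 x) := by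
    simpa [zpow_sub] using (tendsto_const_nhds (x := x)).mul hlim.inv
  exact hJ.mem_of_tendsto htend (Eventually.of_forall hmem)

theorem Nat.Coprime.intCast_dvd_pow_mul_totient_sub_one {c p : ℕ} (h : c.Coprime p) (n : ℕ) :
    (c : ℤ) ∣ (p : ℤ) ^ (n * c.totient) - 1 := by
  have hmod : p ^ (n * c.totient) ≡ 1 [MOD c] := by
    simpa [← pow_mul, mul_comm] using (Nat.ModEq.pow_totient h.symm).pow n
  exact_mod_cast (Nat.modEq_iff_dvd.mp hmod.symm)

theorem stmt_1_general (p : ℕ) {G : Type*} [Group G] [TopologicalSpace G]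
    [IsTopologicalGroup G] (x : G)
    (htu : Tendsto (fun n : ℕ => x ^ p ^ n) atTop (𝓝 1))
    (J : Subgroup G) (hJ : IsClosed (J : Set G))
    (c : ℕ) (hc : 1 ≤ c) (hcp : Nat.Coprime c p) (hxc : x ^ c ∈ J) :
    x ∈ J := by
  have htot : 0 < c.totient := Nat.totient_pos.2 hc
  have hsub : Tendsto (fun n : ℕ => x ^ p ^ (n * c.totient)) atTop (𝓝 1) :=
    htu.comp (tendsto_id.atTop_mul_const' htot)
  refine J.mem_of_tendsto_zpow_of_dvd_sub_one hJ (l := atTop) (c := c) (by simpa using hxc)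
    hcp.intCast_dvd_pow_mul_totient_sub_one ?_
  simpa [← zpow_natCast] using hsub

/-- For a prime `p`, if `x` is a topologically unipotent element of a Hausdorff
topological group generating a relatively compact cyclic subgroup, `J` is a closed
subgroup and `c ≥ 1` is coprime to `p` with `x ^ c ∈ J`, then `x ∈ J`. -/
theorem stmt_1 (p : ℕ) (hp : p.Prime) {G : Type*} [Group G] [TopologicalSpace G]
    [IsTopologicalGroup G] [T2Space G] (x : G)
    (htu : Tendsto (fun n : ℕ => x ^ p ^ n) atTop (𝓝 1))
    (hcompact : IsCompact (closure (Subgroup.zpowers x : Set G)))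
    (J : Subgroup G) (hJ : IsClosed (J : Set G))
    (c : ℕ) (hc : 1 ≤ c) (hcp : Nat.Coprime c p) (hxc : x ^ c ∈ J) :
    x ∈ J :=
  stmt_1_general p x htu J hJ c hc hcp hxc
end

section
/- Let p be a prime number and N ≥ 1 an integer. Every element x of GL_N(ℤ_p) — the group of invertible N×N matrices with entries in the p-adic integers whose inverses also have entries in ℤ_p, topologized by entrywise convergence — admits a unique decomposition x = u·v where u·v = v·u, u has finite order coprime to p, and v is topologically unipotent, i.e. v^(p^n) tends to the identity matrix as n → ∞. -/
/-!
Reduction modulo `p` maps `x` into the finite group `GL_N(𝔽_p)`, so some power `x ^ T`,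
`T = p ^ α * μ` with `p ∤ μ`, lies in the first congruence subgroup; there, every `p`-th power
gains one more `p`-adic digit of congruence to `1`. Hence, along exponents `e m` that are
`≡ 0 mod p ^ (α + m)` and `≡ 1 mod μ`, the powers `x ^ e m` accumulate (by compactness) at an
element `u` with `u ^ μ = 1` commuting with `x`, and `v = x u⁻¹` satisfies `v ^ e 0 ≡ 1 mod p`,
so it is topologically unipotent. Conversely, for any such decomposition `x = u v`,
`x ^ p ^ (c n) = u v ^ p ^ (c n) → u` as soon as `p ^ c ≡ 1` modulo the order of `u`,
which forces uniqueness.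
-/

open Filter Topology

theorem pow_succ_dvd_pow_sub_one {S : Type*} [CommRing S] {p : ℕ} {r a : S} (hr : r ∣ p)
    {k : ℕ} (hk : 1 ≤ k) (ha : r ^ k ∣ a - 1) : r ^ (k + 1) ∣ a ^ p - 1 := by
  have hr1 : r ∣ a - 1 := (dvd_pow_self r (by omega)).trans ha
  -- `∑ a ^ i ≡ p ≡ 0 [MOD r]`, and `a ^ p - 1 = (∑ a ^ i) * (a - 1)`
  have hsum : r ∣ ∑ i ∈ Finset.range p, a ^ i := by
    have : ∑ i ∈ Finset.range p, a ^ i = ∑ i ∈ Finset.range p, (a ^ i - 1) + p := by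
      simp [Finset.sum_sub_distrib]
    rw [this]
    refine dvd_add (Finset.dvd_sum fun i _ => hr1.trans ?_) hr
    simpa using sub_dvd_pow_sub_pow a 1 i
  rw [← geom_sum_mul, pow_succ']
  exact mul_dvd_mul hsum ha

open Polynomial in
theorem exists_one_add_smul_pow_eq {R A : Type*} [CommRing R] [Ring A] [Algebra R A] {p : ℕ}
    {r : R} (hr : r ∣ p) {k : ℕ} (hk : 1 ≤ k) (b : A) :
    ∃ c : A, (1 + r ^ k • b) ^ p = 1 + r ^ (k + 1) • c := by
  -- `A` need not be commutative: evaluate at `b` the same statement in `R[X]`.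
  obtain ⟨q, hq⟩ := pow_succ_dvd_pow_sub_one (a := 1 + C r ^ k * X)
    (by simpa using map_dvd C hr) hk (by simp)
  refine ⟨aeval b q, ?_⟩
  have := congrArg (aeval b) hq
  simp only [map_sub, map_pow, map_add, map_one, map_mul, aeval_C, aeval_X] at this
  rw [← sub_eq_iff_eq_add', Algebra.smul_def, Algebra.smul_def, map_pow, map_pow, this]

section JordanDecomposition

variable {M : Type*} [Monoid M] [TopologicalSpace M]

def IsTopologicalJordanDecomposition (p : ℕ) (x u v : M) : Prop :=
  x = u * v ∧ u * v = v * u ∧ (∃ m : ℕ, 1 ≤ m ∧ Nat.Coprime m p ∧ u ^ m = 1) ∧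
    Tendsto (fun n : ℕ => v ^ p ^ n) atTop (𝓝 1)

namespace IsTopologicalJordanDecomposition

variable [ContinuousMul M] {p : ℕ} {x u v : M}

theorem tendsto_pow_pow_mul (h : IsTopologicalJordanDecomposition p x u v) {m c : ℕ}
    (hm : u ^ m = 1) (hc : 1 ≤ c) (hpc : p ^ c ≡ 1 [MOD m]) :
    Tendsto (fun n : ℕ => x ^ p ^ (c * n)) atTop (𝓝 u) := by
  obtain ⟨rfl, hcomm, -, hv⟩ := h
  have hu : ∀ n, u ^ p ^ (c * n) = u := fun n =>
    (pow_eq_pow_of_modEq (by simpa [pow_mul] using hpc.pow n) hm).trans (pow_one u)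
  simp only [Commute.mul_pow hcomm, hu]
  simpa using (hv.comp (tendsto_id.const_mul_atTop' hc)).const_mul u

theorem unique [IsLeftCancelMul M] [T2Space M] {u' v' : M}
    (h : IsTopologicalJordanDecomposition p x u v)
    (h' : IsTopologicalJordanDecomposition p x u' v') : u = u' ∧ v = v' := by
  obtain ⟨m, hm, hmp, hum⟩ := h.2.2.1
  obtain ⟨m', hm', hmp', hum'⟩ := h'.2.2.1
  have hpc : p ^ (m * m').totient ≡ 1 [MOD m * m'] :=
    Nat.ModEq.pow_totient (Nat.Coprime.mul_left hmp hmp').symm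
  have hc : 1 ≤ (m * m').totient := Nat.totient_pos.mpr (by positivity)
  obtain rfl : u = u' := tendsto_nhds_unique
    (h.tendsto_pow_pow_mul hum hc (hpc.of_mul_right m'))
    (h'.tendsto_pow_pow_mul hum' hc (hpc.of_mul_left m))
  exact ⟨rfl, mul_left_cancel (h.1.symm.trans h'.1)⟩

end IsTopologicalJordanDecomposition

end JordanDecomposition

section Filtration

variable {G : Type*} [Group G] [TopologicalSpace G]

/-- Modelled on the congruence subgroups `ker (GL_N(ℤ_p) → GL_N(ℤ/p^k))`. -/
structure IsPFiltration (p : ℕ) (K : ℕ → Subgroup G) : Prop where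
  antitone : Antitone K
  isClosed : ∀ k, IsClosed (K k : Set G)
  pow_mem : ∀ {k : ℕ}, 1 ≤ k → ∀ {g : G}, g ∈ K k → g ^ p ∈ K (k + 1)
  tendsto_one : ∀ f : ℕ → G, (∀ k, f k ∈ K k) → Tendsto f atTop (𝓝 1)

namespace IsPFiltration

variable {p : ℕ} {K : ℕ → Subgroup G}

theorem pow_pow_mem (hK : IsPFiltration p K) {g : G} (hg : g ∈ K 1) (n : ℕ) :
    g ^ p ^ n ∈ K (n + 1) := by
  induction n with
  | zero => simpa using hg
  | succ n ih =>
    rw [pow_succ, pow_mul]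
    exact hK.pow_mem (by omega) ih

theorem pow_mem_of_dvd (hK : IsPFiltration p K) {x : G} {T : ℕ} (hx : x ^ T ∈ K 1) {n a : ℕ}
    (ha : T * p ^ n ∣ a) : x ^ a ∈ K (n + 1) := by
  obtain ⟨b, rfl⟩ := ha
  rw [pow_mul, pow_mul]
  exact Subgroup.pow_mem _ (hK.pow_pow_mem hx n) b

theorem tendsto_pow_pow_one (hK : IsPFiltration p K) {g : G} {n₀ : ℕ}
    (hg : g ^ p ^ n₀ ∈ K 1) : Tendsto (fun n : ℕ => g ^ p ^ n) atTop (𝓝 1) := by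
  rw [← tendsto_add_atTop_iff_nat n₀]
  refine hK.tendsto_one _ fun n => hK.antitone n.le_succ ?_
  rw [pow_add, pow_mul']
  exact hK.pow_pow_mem hg n

variable [ContinuousMul G]

theorem exists_tendsto_of_mul_inv_mem [CompactSpace G] (hK : IsPFiltration p K) {y : ℕ → G}
    (hy : ∀ m n, m ≤ n → y n * (y m)⁻¹ ∈ K (m + 1)) :
    ∃ u, Tendsto y atTop (𝓝 u) ∧ ∀ m, u * (y m)⁻¹ ∈ K (m + 1) := by
  obtain ⟨u, hu⟩ := exists_clusterPt_of_compactSpace (map y atTop)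
  have hmem : ∀ m, u * (y m)⁻¹ ∈ K (m + 1) := fun m =>
    ((hK.isClosed (m + 1)).preimage (continuous_mul_const (y m)⁻¹)).mem_of_mapClusterPt hu
      (eventually_atTop.2 ⟨m, hy m⟩)
  refine ⟨u, ?_, hmem⟩
  simpa using
    (hK.tendsto_one _ fun m => hK.antitone m.le_succ (inv_mem (hmem m))).mul_const u

theorem exists_isTopologicalJordanDecomposition [CompactSpace G] [T2Space G]
    (hK : IsPFiltration p K) (hp : p.Prime) {x : G} {T : ℕ} (hT : T ≠ 0) (hxT : x ^ T ∈ K 1) :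
    ∃ u v, IsTopologicalJordanDecomposition p x u v := by
  obtain ⟨α, μ, hμ, hμp, rfl⟩ : ∃ α μ, 0 < μ ∧ μ.Coprime p ∧ T = p ^ α * μ :=
    ⟨_, _, Nat.ordCompl_pos p hT, (Nat.coprime_ordCompl hp hT).symm,
      (Nat.ordProj_mul_ordCompl_eq_self T p).symm⟩
  have hc : 1 ≤ μ.totient := Nat.totient_pos.mpr hμ
  set e : ℕ → ℕ := fun m => p ^ (μ.totient * (m + α))
  have he_one : ∀ m, e m ≡ 1 [MOD μ] := fun m => by
    simpa [e, pow_mul] using (Nat.ModEq.pow_totient hμp.symm).pow (m + α)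
  have he_dvd : ∀ {m n}, m ≤ n → p ^ (α + m) ∣ e n := fun h => pow_dvd_pow p (by nlinarith)
  have he_mono : Monotone e := fun m n h =>
    Nat.pow_le_pow_right hp.pos (Nat.mul_le_mul_left _ (by omega))
  have hT_mul : ∀ m, p ^ α * μ * p ^ m = p ^ (α + m) * μ := fun m => by ring
  obtain ⟨u, hyu, hu⟩ := hK.exists_tendsto_of_mul_inv_mem (y := fun m => x ^ e m)
    fun m n hmn => by
      rw [← pow_sub_mul_pow x (he_mono hmn), mul_inv_cancel_right]
      refine hK.pow_mem_of_dvd hxT ?_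
      rw [hT_mul]
      exact Nat.Coprime.mul_dvd_of_dvd_of_dvd (hμp.symm.pow_left _)
        (Nat.dvd_sub (he_dvd hmn) (he_dvd le_rfl))
        ((Nat.modEq_iff_dvd' (he_mono hmn)).mp ((he_one m).trans (he_one n).symm))
  have huμ : u ^ μ = 1 := tendsto_nhds_unique (hyu.pow μ) <|
    hK.tendsto_one _ fun m => hK.antitone m.le_succ <| by
      rw [← pow_mul]
      exact hK.pow_mem_of_dvd hxT (by rw [hT_mul]; exact mul_dvd_mul_right (he_dvd le_rfl) μ)
  have hux : Commute u x := tendsto_nhds_unique (hyu.mul_const x) <| by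
    simpa [(Commute.pow_self x _).eq] using hyu.const_mul x
  refine ⟨u, x * u⁻¹, by rw [← mul_assoc, hux.eq, mul_inv_cancel_right],
    by simp [← mul_assoc, hux.eq], ⟨μ, hμ, hμp, huμ⟩,
    hK.tendsto_pow_pow_one (n₀ := μ.totient * α) ?_⟩
  rw [hux.symm.inv_right.mul_pow, inv_pow, ← show e 0 = p ^ (μ.totient * α) by simp [e],
    pow_eq_pow_of_modEq (he_one 0) huμ, pow_one]
  simpa using inv_mem (hu 0)

end IsPFiltration

end Filtration

instance Matrix.compactSpace {m n R : Type*} [TopologicalSpace R] [CompactSpace R] :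
    CompactSpace (Matrix m n R) :=
  inferInstanceAs (CompactSpace (m → n → R))

namespace PadicInt

variable {p : ℕ} [Fact p.Prime]

theorem pow_dvd_iff_norm_le {z : ℤ_[p]} {k : ℕ} :
    (p : ℤ_[p]) ^ k ∣ z ↔ ‖z‖ ≤ (p : ℝ) ^ (-k : ℤ) := by
  rw [norm_le_pow_iff_mem_span_pow, Ideal.mem_span_singleton]

theorem isClosed_setOf_pow_dvd (k : ℕ) : IsClosed {z : ℤ_[p] | (p : ℤ_[p]) ^ k ∣ z} := by
  simp only [pow_dvd_iff_norm_le]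
  exact isClosed_le continuous_norm continuous_const

theorem tendsto_of_pow_dvd_sub {z : ℕ → ℤ_[p]} {a : ℤ_[p]}
    (h : ∀ k, (p : ℤ_[p]) ^ k ∣ z k - a) : Tendsto z atTop (𝓝 a) := by
  rw [tendsto_iff_norm_sub_tendsto_zero]
  refine squeeze_zero (fun _ => norm_nonneg _) (fun k => pow_dvd_iff_norm_le.mp (h k)) ?_
  simp only [zpow_neg, zpow_natCast]
  exact tendsto_inv_atTop_zero.comp
    (tendsto_pow_atTop_atTop_of_one_lt (by exact_mod_cast (Fact.out : p.Prime).one_lt))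

variable (p) (n : Type*) [Fintype n] [DecidableEq n]

noncomputable def congruenceSubgroup (k : ℕ) : Subgroup (GL n ℤ_[p]) :=
  (Matrix.GeneralLinearGroup.map (toZModPow k : ℤ_[p] →+* ZMod (p ^ k))).ker

variable {p n}

theorem mem_congruenceSubgroup_iff {k : ℕ} {g : GL n ℤ_[p]} :
    g ∈ congruenceSubgroup p n k ↔ ∀ i j, (p : ℤ_[p]) ^ k ∣ ((g : Matrix n n ℤ_[p]) - 1) i j := by
  simp only [congruenceSubgroup, MonoidHom.mem_ker, Units.ext_iff, ← Matrix.ext_iff,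
    ← Ideal.mem_span_singleton, ← ker_toZModPow, RingHom.mem_ker]
  refine forall₂_congr fun i j => ?_
  rw [Matrix.GeneralLinearGroup.map_apply, Matrix.sub_apply, map_sub, sub_eq_zero,
    Units.val_one, Matrix.one_apply, Matrix.one_apply, apply_ite (toZModPow k), map_one, map_zero]

theorem mem_congruenceSubgroup_iff_exists {k : ℕ} {g : GL n ℤ_[p]} :
    g ∈ congruenceSubgroup p n k ↔
      ∃ B : Matrix n n ℤ_[p], (g : Matrix n n ℤ_[p]) = 1 + (p : ℤ_[p]) ^ k • B := by
  simp only [mem_congruenceSubgroup_iff, ← sub_eq_iff_eq_add', ← Matrix.ext_iff,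
    Matrix.smul_apply, smul_eq_mul, Dvd.dvd]
  exact ⟨fun h => ⟨_, fun i j => (h i j).choose_spec⟩, fun ⟨B, hB⟩ i j => ⟨B i j, hB i j⟩⟩

theorem pow_mem_congruenceSubgroup {k : ℕ} (hk : 1 ≤ k) {g : GL n ℤ_[p]}
    (hg : g ∈ congruenceSubgroup p n k) : g ^ p ∈ congruenceSubgroup p n (k + 1) := by
  obtain ⟨B, hB⟩ := mem_congruenceSubgroup_iff_exists.mp hg
  obtain ⟨C, hC⟩ := exists_one_add_smul_pow_eq (dvd_refl (p : ℤ_[p])) hk B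
  exact mem_congruenceSubgroup_iff_exists.mpr ⟨C, by rw [Units.val_pow_eq_pow_val, hB, hC]⟩

theorem isClosed_congruenceSubgroup (k : ℕ) :
    IsClosed (congruenceSubgroup p n k : Set (GL n ℤ_[p])) := by
  have : (congruenceSubgroup p n k : Set (GL n ℤ_[p])) = ⋂ (i) (j),
      (fun g : GL n ℤ_[p] => ((g : Matrix n n ℤ_[p]) - 1) i j) ⁻¹' {z | (p : ℤ_[p]) ^ k ∣ z} := by
    ext g
    simp [mem_congruenceSubgroup_iff]
  rw [this]
  exact isClosed_iInter fun i => isClosed_iInter fun j => (isClosed_setOf_pow_dvd k).preimage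
    ((Units.continuous_val.sub continuous_const).matrix_elem i j)

theorem tendsto_one_of_mem_congruenceSubgroup {f : ℕ → GL n ℤ_[p]}
    (hf : ∀ k, f k ∈ congruenceSubgroup p n k) : Tendsto f atTop (𝓝 1) := by
  have hval : ∀ g : ℕ → GL n ℤ_[p], (∀ k, g k ∈ congruenceSubgroup p n k) →
      Tendsto (fun k => (g k : Matrix n n ℤ_[p])) atTop (𝓝 1) := fun g hg =>
    tendsto_pi_nhds.2 fun i => tendsto_pi_nhds.2 fun j =>
      tendsto_of_pow_dvd_sub fun k => mem_congruenceSubgroup_iff.mp (hg k) i j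
  rw [Units.isEmbedding_embedProduct.tendsto_nhds_iff]
  exact (hval f hf).prodMk_nhds
    (MulOpposite.continuous_op.tendsto _ |>.comp (hval _ fun k => inv_mem (hf k)))

theorem exists_pow_mem_congruenceSubgroup_one (x : GL n ℤ_[p]) :
    ∃ T ≠ 0, x ^ T ∈ congruenceSubgroup p n 1 :=
  ⟨_, (orderOf_pos (Matrix.GeneralLinearGroup.map (toZModPow 1) x)).ne',
    by rw [congruenceSubgroup, MonoidHom.mem_ker, map_pow, pow_orderOf_eq_one]⟩

theorem isPFiltration_congruenceSubgroup : IsPFiltration p (congruenceSubgroup p n) where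
  antitone _ _ hkl _ hg := mem_congruenceSubgroup_iff.mpr fun i j =>
    (pow_dvd_pow _ hkl).trans (mem_congruenceSubgroup_iff.mp hg i j)
  isClosed := isClosed_congruenceSubgroup
  pow_mem := pow_mem_congruenceSubgroup
  tendsto_one _ := tendsto_one_of_mem_congruenceSubgroup

end PadicInt

theorem stmt_4_general (p : ℕ) [Fact p.Prime] (N : ℕ)
    (x : GL (Fin N) ℤ_[p]) :
    ∃! uv : GL (Fin N) ℤ_[p] × GL (Fin N) ℤ_[p],
      x = uv.1 * uv.2 ∧ uv.1 * uv.2 = uv.2 * uv.1 ∧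
      (∃ m : ℕ, 1 ≤ m ∧ Nat.Coprime m p ∧ uv.1 ^ m = 1) ∧
      Tendsto (fun n : ℕ => uv.2 ^ p ^ n) atTop (𝓝 1) := by
  obtain ⟨T, hT, hxT⟩ := PadicInt.exists_pow_mem_congruenceSubgroup_one x
  obtain ⟨u, v, h⟩ :=
    PadicInt.isPFiltration_congruenceSubgroup.exists_isTopologicalJordanDecomposition
      Fact.out hT hxT
  exact ⟨(u, v), h, fun uv (huv : IsTopologicalJordanDecomposition p x uv.1 uv.2) =>
    Prod.ext_iff.mpr (huv.unique h)⟩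

/-- Topological Jordan decomposition in `GL_N(ℤ_p)`: every element factors uniquely
as a commuting product `u * v` with `u` of finite order coprime to `p` and `v`
topologically unipotent. -/
theorem stmt_4 (p : ℕ) [Fact p.Prime] (N : ℕ) (hN : 1 ≤ N)
    (x : GL (Fin N) ℤ_[p]) :
    ∃! uv : GL (Fin N) ℤ_[p] × GL (Fin N) ℤ_[p],
      x = uv.1 * uv.2 ∧ uv.1 * uv.2 = uv.2 * uv.1 ∧
      (∃ m : ℕ, 1 ≤ m ∧ Nat.Coprime m p ∧ uv.1 ^ m = 1) ∧
      Tendsto (fun n : ℕ => uv.2 ^ p ^ n) atTop (𝓝 1) :=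
  stmt_4_general p N x
end

section
/- Let p be a prime number and c ≥ 1 an integer coprime to p. Let P be a group, σ an automorphism of P with σ^c = id, M a subgroup of P, and U₁ ⊇ U₂ ⊇ ⋯ ⊇ U_m ⊇ U_{m+1} = {1} a chain of subgroups of P such that for each i ∈ {1, …, m}: σ(U_i) = U_i, U_{i+1} is a normal subgroup of U_i, and the quotient group U_i/U_{i+1} is abelian with every element of order a power of p. Write U = U₁ and assume: (a) for every u ∈ U, if u·M·u⁻¹ = M then u = 1; (b) there exists u₁ ∈ U with σ(M) = u₁·M·u₁⁻¹. Then there exists v ∈ U such that the subgroup v·M·v⁻¹ is stable under σ, i.e. σ(v·M·v⁻¹) = v·M·v⁻¹. -/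
/-!
Put `w(v) = σ v * u₁ * v⁻¹`, so that `σ (v M v⁻¹) = w(v) (v M v⁻¹) w(v)⁻¹`; we look for `v ∈ U 1`
with `w(v) = 1` by pushing `w(v)` down the filtration. If `w = w(v) ∈ U i`, iterating `σ` gives
`σ^c (v M v⁻¹) = N (v M v⁻¹) N⁻¹` with `N = σ^{c-1}(w) ⋯ σ(w) w ∈ U i`, so `N = 1` because `σ^c = 1`
and no nontrivial element of `U 1` normalizes `v M v⁻¹`. In the abelian group `U i / U (i+1)`,
whose elements have order prime to `c`, a twisted cocycle of norm one is a coboundary: the product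
`t` of the partial norms satisfies `σ t * w ^ c = t`, and `w` is a power of `w ^ c`. This yields
`z ∈ U i` with `w(z v) = σ z * w * z⁻¹ ∈ U (i+1)`.
-/

open Pointwise

section TwistedNorm

variable {G H : Type*}

/-- `twistedNorm φ w k = φ^[k-1] w * ⋯ * φ w * w`. -/
def twistedNorm [Monoid G] (φ : G →* G) (w : G) : ℕ → G
  | 0 => 1
  | k + 1 => φ (twistedNorm φ w k) * w

@[simp]
lemma twistedNorm_zero [Monoid G] (φ : G →* G) (w : G) : twistedNorm φ w 0 = 1 := rfl

lemma twistedNorm_succ [Monoid G] (φ : G →* G) (w : G) (k : ℕ) :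
    twistedNorm φ w (k + 1) = φ (twistedNorm φ w k) * w := rfl

lemma map_twistedNorm [Monoid G] [Monoid H] {φ : G →* G} {ψ : H →* H} (f : G →* H)
    (hf : ∀ x, f (φ x) = ψ (f x)) (w : G) (k : ℕ) :
    f (twistedNorm φ w k) = twistedNorm ψ (f w) k := by
  induction k with
  | zero => exact map_one f
  | succ k ih => rw [twistedNorm_succ, twistedNorm_succ, map_mul, hf, ih]

lemma exists_map_mul_pow_eq_of_twistedNorm_eq_one [CommGroup G] (φ : G →* G) {w : G} {c : ℕ}
    (hN : twistedNorm φ w c = 1) : ∃ t, φ t * w ^ c = t := by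
  refine ⟨∏ j ∈ Finset.range c, twistedNorm φ w j, ?_⟩
  have h := (Finset.prod_range_succ (twistedNorm φ w) c).symm.trans
    (Finset.prod_range_succ' (twistedNorm φ w) c)
  simp only [hN, twistedNorm_zero, mul_one, twistedNorm_succ, Finset.prod_mul_distrib,
    Finset.prod_const, Finset.card_range] at h
  rw [map_prod, ← h]

lemma exists_map_mul_eq_of_twistedNorm_eq_one [CommGroup G] (φ : G →* G) {w : G} {c e : ℕ}
    (he : e.Coprime c) (hwe : w ^ e = 1) (hN : twistedNorm φ w c = 1) : ∃ z, φ z * w = z := by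
  obtain ⟨t, ht⟩ := exists_map_mul_pow_eq_of_twistedNorm_eq_one φ hN
  obtain ⟨d, hd⟩ := exists_pow_eq_self_of_coprime
    (Nat.Coprime.coprime_dvd_right (orderOf_dvd_of_pow_eq_one hwe) he.symm)
  exact ⟨t ^ d, by rw [map_pow, ← hd, ← mul_pow, ht]⟩

lemma exists_map_mul_mul_inv_mem_of_twistedNorm_mem [Group G] {K : Subgroup G} [K.Normal]
    (hK : ∀ a b : G, a * b * a⁻¹ * b⁻¹ ∈ K) {φ : G →* G} (hφK : K ≤ K.comap φ) {w : G}
    {c e : ℕ} (he : e.Coprime c) (hwe : w ^ e ∈ K) (hN : twistedNorm φ w c ∈ K) :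
    ∃ z, φ z * w * z⁻¹ ∈ K := by
  let : CommGroup (G ⧸ K) :=
    { mul_comm := by
        rintro ⟨a⟩ ⟨b⟩
        refine QuotientGroup.eq.mpr ?_
        simpa [mul_assoc] using hK b⁻¹ a⁻¹ }
  have hN' : twistedNorm (QuotientGroup.map K K φ hφK) (w : G ⧸ K) c = 1 := by
    rw [← QuotientGroup.mk'_apply, ← map_twistedNorm (QuotientGroup.mk' K) (fun _ => rfl),
      QuotientGroup.mk'_apply, QuotientGroup.eq_one_iff]
    exact hN
  obtain ⟨⟨z⟩, hz⟩ := exists_map_mul_eq_of_twistedNorm_eq_one _ he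
    (by rw [← QuotientGroup.mk_pow, QuotientGroup.eq_one_iff]; exact hwe) hN'
  refine ⟨z, ?_⟩
  rw [← QuotientGroup.eq_one_iff, QuotientGroup.mk_mul, QuotientGroup.mk_mul,
    QuotientGroup.mk_inv, mul_inv_eq_one]
  exact hz

end TwistedNorm

section Conjugation

variable {P : Type*} [Group P]

lemma MulAut.mul_conj (σ : MulAut P) (g : P) :
    σ * MulAut.conj g = MulAut.conj (σ g) * σ := by
  ext x
  simp [MulAut.conj_apply]

lemma smul_conj_smul_of_smul_eq {σ : MulAut P} {M : Subgroup P} {u₁ : P}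
    (h : σ • M = MulAut.conj u₁ • M) (v : P) :
    σ • MulAut.conj v • M = MulAut.conj (σ v * u₁ * v⁻¹) • MulAut.conj v • M := by
  rw [← mul_smul, MulAut.mul_conj, mul_smul, h, ← mul_smul, ← mul_smul, ← map_mul, ← map_mul,
    inv_mul_cancel_right]

lemma pow_smul_eq_conj_twistedNorm_smul {σ : MulAut P} {M : Subgroup P} {w : P}
    (h : σ • M = MulAut.conj w • M) (k : ℕ) :
    (σ ^ k) • M = MulAut.conj (twistedNorm σ.toMonoidHom w k) • M := by
  induction k with
  | zero => simp
  | succ k ih =>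
    rw [pow_succ', mul_smul, ih, ← mul_smul, MulAut.mul_conj, mul_smul, h, ← mul_smul, ← map_mul,
      twistedNorm_succ]
    rfl

lemma eq_one_of_conj_smul_conj_smul_eq {U M : Subgroup P}
    (ha : ∀ u ∈ U, MulAut.conj u • M = M → u = 1) {u v : P} (hu : u ∈ U) (hv : v ∈ U)
    (h : MulAut.conj u • MulAut.conj v • M = MulAut.conj v • M) : u = 1 := by
  have h1 : v⁻¹ * u * v = 1 := ha _ (mul_mem (mul_mem (inv_mem hv) hu) hv) <| by
    rw [map_mul, map_mul, mul_smul, mul_smul, h, ← mul_smul, ← map_mul, inv_mul_cancel, map_one,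
      one_smul]
  rw [mul_assoc, inv_mul_eq_one] at h1
  exact mul_eq_right.mp h1.symm

theorem exists_map_mul_mul_inv_mem_of_smul_eq {σ : MulAut P} {c : ℕ} (hσ : σ ^ c = 1)
    {M H K : Subgroup P} (hσH : ∀ x ∈ H, σ x ∈ H) (hσK : ∀ x ∈ K, σ x ∈ K)
    (hKnormal : ∀ a ∈ H, ∀ b ∈ K, a * b * a⁻¹ ∈ K)
    (hcomm : ∀ a ∈ H, ∀ b ∈ H, a * b * a⁻¹ * b⁻¹ ∈ K)
    (hprim : ∀ a ∈ H, ∃ e : ℕ, e.Coprime c ∧ a ^ e ∈ K)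
    (ha : ∀ u ∈ H, MulAut.conj u • M = M → u = 1) {w : P} (hw : w ∈ H)
    (hσM : σ • M = MulAut.conj w • M) : ∃ z ∈ H, σ z * w * z⁻¹ ∈ K := by
  let φ : H →* H := (σ.toMonoidHom.comp H.subtype).codRestrict H fun x => hσH x x.2
  have hN : ((twistedNorm φ ⟨w, hw⟩ c : H) : P) = twistedNorm σ.toMonoidHom w c :=
    map_twistedNorm H.subtype (fun _ => rfl) _ c
  have hN1 : twistedNorm σ.toMonoidHom w c = 1 := ha _ (hN ▸ (twistedNorm φ _ c).2) <| by
    rw [← pow_smul_eq_conj_twistedNorm_smul hσM, hσ, one_smul]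
  have : (K.subgroupOf H).Normal := ⟨fun b hb g => by
    simpa [Subgroup.mem_subgroupOf] using hKnormal g g.2 b hb⟩
  obtain ⟨e, he, hwe⟩ := hprim w hw
  obtain ⟨z, hz⟩ := exists_map_mul_mul_inv_mem_of_twistedNorm_mem (K := K.subgroupOf H)
    (φ := φ) (w := ⟨w, hw⟩) (fun a b => hcomm a a.2 b b.2) (fun x hx => hσK x hx) he hwe
    (by rw [Subgroup.mem_subgroupOf, hN, hN1]; exact one_mem K)
  exact ⟨z, z.2, hz⟩

end Conjugation

section Filtration

variable {P : Type*} [Group P] {U : ℕ → Subgroup P} {m i : ℕ}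

lemma le_one_of_forall_succ_le (hchain : ∀ i, 1 ≤ i → i ≤ m → U (i + 1) ≤ U i)
    (hi : 1 ≤ i) (him : i ≤ m + 1) : U i ≤ U 1 := by
  induction i, hi using Nat.le_induction with
  | base => exact le_rfl
  | succ i hi ih => exact (hchain i hi (by omega)).trans (ih (by omega))

lemma map_mem_of_forall_map_eq {σ : MulAut P} (hlast : U (m + 1) = ⊥)
    (hσU : ∀ i, 1 ≤ i → i ≤ m → Subgroup.map σ.toMonoidHom (U i) = U i)
    (hi : 1 ≤ i) (him : i ≤ m + 1) : ∀ x ∈ U i, σ x ∈ U i := by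
  intro x hx
  rcases Nat.lt_or_ge i (m + 1) with h | h
  · exact hσU i hi (by omega) ▸ Subgroup.mem_map_of_mem _ hx
  · obtain rfl : i = m + 1 := by omega
    rw [hlast, Subgroup.mem_bot] at hx ⊢
    rw [hx, map_one]

end Filtration

theorem stmt_8_general (p : ℕ) (c : ℕ) (hcp : Nat.Coprime c p)
    {P : Type*} [Group P] (σ : MulAut P) (hσ : σ ^ c = 1)
    (M : Subgroup P) (m : ℕ) (U : ℕ → Subgroup P)
    (hchain : ∀ i : ℕ, 1 ≤ i → i ≤ m → U (i + 1) ≤ U i)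
    (hlast : U (m + 1) = ⊥)
    (hσU : ∀ i : ℕ, 1 ≤ i → i ≤ m → Subgroup.map σ.toMonoidHom (U i) = U i)
    (hnormal : ∀ i : ℕ, 1 ≤ i → i ≤ m →
      ∀ a ∈ U i, ∀ b ∈ U (i + 1), a * b * a⁻¹ ∈ U (i + 1))
    (hab : ∀ i : ℕ, 1 ≤ i → i ≤ m →
      ∀ a ∈ U i, ∀ b ∈ U i, a * b * a⁻¹ * b⁻¹ ∈ U (i + 1))
    (hpprim : ∀ i : ℕ, 1 ≤ i → i ≤ m → ∀ a ∈ U i, ∃ n : ℕ, a ^ p ^ n ∈ U (i + 1))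
    (ha : ∀ u ∈ U 1, Subgroup.map (MulAut.conj u).toMonoidHom M = M → u = 1)
    (hb : ∃ u₁ ∈ U 1,
      Subgroup.map σ.toMonoidHom M = Subgroup.map (MulAut.conj u₁).toMonoidHom M) :
    ∃ v ∈ U 1,
      Subgroup.map σ.toMonoidHom (Subgroup.map (MulAut.conj v).toMonoidHom M)
        = Subgroup.map (MulAut.conj v).toMonoidHom M := by
  obtain ⟨u₁, hu₁, hσM⟩ := hb
  have hσU' : ∀ i, 1 ≤ i → i ≤ m + 1 → ∀ x ∈ U i, σ x ∈ U i := fun _ =>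
    map_mem_of_forall_map_eq hlast hσU
  have hU1 : ∀ i, 1 ≤ i → i ≤ m + 1 → U i ≤ U 1 := fun _ => le_one_of_forall_succ_le hchain
  have approx : ∀ k ≤ m, ∃ v ∈ U 1, σ v * u₁ * v⁻¹ ∈ U (k + 1) := by
    intro k hk
    induction k with
    | zero => exact ⟨1, one_mem _, by simpa using hu₁⟩
    | succ k ih =>
      obtain ⟨v, hv, hw⟩ := ih (by omega)
      obtain ⟨z, hz, hzw⟩ := exists_map_mul_mul_inv_mem_of_smul_eq hσ
        (hσU' _ (by omega) (by omega)) (hσU' _ (by omega) (by omega))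
        (hnormal _ (by omega) hk) (hab _ (by omega) hk)
        (fun a ha => let ⟨n, hn⟩ := hpprim _ (by omega) hk a ha
          ⟨p ^ n, (hcp.pow_right n).symm, hn⟩)
        (fun u hu => eq_one_of_conj_smul_conj_smul_eq ha (hU1 _ (by omega) (by omega) hu) hv)
        hw (smul_conj_smul_of_smul_eq hσM v)
      exact ⟨z * v, mul_mem (hU1 _ (by omega) (by omega) hz) hv, by simpa [mul_assoc] using hzw⟩
  obtain ⟨v, hv, hw⟩ := approx m le_rfl
  rw [hlast, Subgroup.mem_bot] at hw
  have hσM' := smul_conj_smul_of_smul_eq hσM v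
  rw [hw, map_one, one_smul] at hσM'
  exact ⟨v, hv, hσM'⟩

/-- Existence of a `σ`-stable conjugate of a Levi factor: given an automorphism `σ`
of order dividing `c` (coprime to `p`), a subgroup `M`, and a `σ`-stable filtration
`U 1 ⊇ ⋯ ⊇ U m ⊇ U (m+1) = ⊥` with abelian `p`-primary successive quotients, if no
nontrivial element of `U 1` normalizes `M` and `σ M` is conjugate to `M` by an element
of `U 1`, then some `U 1`-conjugate of `M` is `σ`-stable. -/
theorem stmt_8 (p : ℕ) (hp : p.Prime) (c : ℕ) (hc : 1 ≤ c) (hcp : Nat.Coprime c p)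
    {P : Type*} [Group P] (σ : MulAut P) (hσ : σ ^ c = 1)
    (M : Subgroup P) (m : ℕ) (U : ℕ → Subgroup P)
    (hchain : ∀ i : ℕ, 1 ≤ i → i ≤ m → U (i + 1) ≤ U i)
    (hlast : U (m + 1) = ⊥)
    (hσU : ∀ i : ℕ, 1 ≤ i → i ≤ m → Subgroup.map σ.toMonoidHom (U i) = U i)
    (hnormal : ∀ i : ℕ, 1 ≤ i → i ≤ m →
      ∀ a ∈ U i, ∀ b ∈ U (i + 1), a * b * a⁻¹ ∈ U (i + 1))
    (hab : ∀ i : ℕ, 1 ≤ i → i ≤ m →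
      ∀ a ∈ U i, ∀ b ∈ U i, a * b * a⁻¹ * b⁻¹ ∈ U (i + 1))
    (hpprim : ∀ i : ℕ, 1 ≤ i → i ≤ m → ∀ a ∈ U i, ∃ n : ℕ, a ^ p ^ n ∈ U (i + 1))
    (ha : ∀ u ∈ U 1, Subgroup.map (MulAut.conj u).toMonoidHom M = M → u = 1)
    (hb : ∃ u₁ ∈ U 1,
      Subgroup.map σ.toMonoidHom M = Subgroup.map (MulAut.conj u₁).toMonoidHom M) :
    ∃ v ∈ U 1,
      Subgroup.map σ.toMonoidHom (Subgroup.map (MulAut.conj v).toMonoidHom M)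
        = Subgroup.map (MulAut.conj v).toMonoidHom M :=
  stmt_8_general p c hcp σ hσ M m U hchain hlast hσU hnormal hab hpprim ha hb
end

section
/- Let p be a prime number and c ≥ 1 an integer coprime to p. Let Γ be a compact Hausdorff topological group and (Γ_n)_{n ≥ 1} a decreasing sequence of normal subgroups of Γ with Γ₁ = Γ, forming a basis of neighbourhoods of the identity, such that for every n ≥ 1 the quotient group Γ_n/Γ_{n+1} is abelian and every one of its elements has order a power of p. Let σ be a continuous automorphism of Γ with σ^c = id and σ(Γ_n) = Γ_n for all n. Then for every g ∈ Γ there exist k, h ∈ Γ with σ(h) = h and g = σ(k)·h·k⁻¹. -/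
/-!
By induction on `n` one writes `g = σ k * h * k⁻¹` with `h⁻¹ * σ h ∈ Γ_n`; compactness of
`Γ × Γ` then produces an exact solution. For the inductive step, write the finite abelian
`p`-group `M = Γ_n / Γ_{n+1}` additively. There `σ` acts by `S` with `S ^ c = 1`, and conjugation
by `h⁻¹` acts by `Θ`, which commutes with `S` (because `h⁻¹ * σ h ∈ Γ_n` and `M` is abelian) and
has `p`-power order. Replacing `h` by `σ k * h * k⁻¹` with `k ∈ Γ_n` adds `(Θ S - 1)(S - 1) k`
to the class `d` of `h⁻¹ * σ h`, and `σ ^ c = 1` gives `(1 + S + ⋯ + S ^ (c - 1)) d = 0`.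
Since `c` is prime to `p`, this forces `d ∈ (S - 1) M`, and `Θ S - 1` is injective, hence
bijective, on `(S - 1) M`: a fixed vector of `Θ S` there is fixed by `S` (the orders of `Θ` and
`S` are coprime), so `c` kills it.
-/

open Filter Topology

section CoprimeEndomorphisms

theorem AddSubgroup.mem_of_nsmul_mem_of_coprime {M : Type*} [AddGroup M] {c : ℕ}
    (hc : (Nat.card M).Coprime c) {B : AddSubgroup M} {x : M} (hx : c • x ∈ B) : x ∈ B := by
  obtain ⟨u, v, huv⟩ := Nat.isCoprime_iff_coprime.mpr hc
  have hx' : x = u • (Nat.card M • x) + v • (c • x) := by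
    rw [← natCast_zsmul, ← natCast_zsmul, ← mul_zsmul, ← mul_zsmul, ← add_zsmul, huv, one_zsmul]
  rw [hx', card_nsmul_eq_zero', zsmul_zero, zero_add]
  exact B.zsmul_mem hx v

variable {M : Type*} [AddCommGroup M] {c : ℕ}

theorem mem_range_sub_one_of_geom_sum_apply_eq_zero (hc : (Nat.card M).Coprime c)
    (S : Module.End ℤ M) {d : M} (hd : (∑ i ∈ Finset.range c, S ^ i) d = 0) :
    d ∈ LinearMap.range (S - 1) := by
  have hgeom : (c : Module.End ℤ M) - ∑ i ∈ Finset.range c, S ^ i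
      = (S - 1) * -∑ i ∈ Finset.range c, ∑ j ∈ Finset.range i, S ^ j := by
    rw [mul_neg, Finset.mul_sum]
    simp only [mul_geom_sum, Finset.sum_sub_distrib, Finset.sum_const, Finset.card_range,
      nsmul_one, neg_sub]
  have hcd : c • d ∈ LinearMap.range (S - 1) := by
    rw [← Module.End.natCast_apply (R := ℤ), ← sub_zero ((c : Module.End ℤ M) d), ← hd,
      ← LinearMap.sub_apply, hgeom]
    exact LinearMap.mem_range_self _ _
  exact AddSubgroup.mem_of_nsmul_mem_of_coprime (B := (LinearMap.range (S - 1)).toAddSubgroup)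
    hc hcd

theorem eq_zero_of_mem_range_sub_one_of_mul_apply_eq_self (hc : (Nat.card M).Coprime c)
    {S Θ : Module.End ℤ M} (hSΘ : Commute S Θ) (hSc : S ^ c = 1) {q : ℕ} (hq : q.Coprime c)
    (hΘq : Θ ^ q = 1) {y : M} (hy : y ∈ LinearMap.range (S - 1)) (hfix : (Θ * S) y = y) :
    y = 0 := by
  obtain ⟨e, he_q, he_c⟩ := Nat.chineseRemainder hq 0 1
  have hpow : (Θ * S) ^ e = S := by
    rw [hSΘ.symm.mul_pow, pow_eq_pow_mod e hΘq, he_q, pow_eq_pow_mod e hSc, he_c,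
      ← pow_eq_pow_mod 0 hΘq, ← pow_eq_pow_mod 1 hSc, pow_zero, pow_one, one_mul]
  have hSy : S y = y := by
    rw [← hpow, Module.End.coe_pow]
    exact Function.IsFixedPt.iterate hfix e
  obtain ⟨x, rfl⟩ := hy
  refine AddSubgroup.mem_of_nsmul_mem_of_coprime (B := ⊥) hc ?_
  have hsum : (∑ i ∈ Finset.range c, S ^ i) ((S - 1) x) = c • (S - 1) x := by
    simp only [LinearMap.sum_apply, Module.End.coe_pow, (Function.IsFixedPt.iterate hSy _).eq,
      Finset.sum_const, Finset.card_range]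
  rw [AddSubgroup.mem_bot, ← hsum, ← Module.End.mul_apply, geom_sum_mul, hSc, sub_self]
  rfl

theorem exists_mul_sub_one_mul_sub_one_apply_eq [Finite M] (hc : (Nat.card M).Coprime c)
    {S Θ : Module.End ℤ M} (hSΘ : Commute S Θ) (hSc : S ^ c = 1) {q : ℕ} (hq : q.Coprime c)
    (hΘq : Θ ^ q = 1) {d : M} (hd : (∑ i ∈ Finset.range c, S ^ i) d = 0) :
    ∃ k, ((Θ * S - 1) * (S - 1)) k = d := by
  set B := LinearMap.range (S - 1)
  have hcomm : Commute (Θ * S - 1) (S - 1) :=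
    ((hSΘ.symm.mul_left (Commute.refl S)).sub_right (Commute.one_right _)).sub_left
      (Commute.one_left _)
  have hmaps : Set.MapsTo ⇑(Θ * S - 1) (B : Set M) B := by
    rintro _ ⟨x, rfl⟩
    exact ⟨(Θ * S - 1) x, by rw [← Module.End.mul_apply, ← Module.End.mul_apply, hcomm.eq]⟩
  have hinj : Set.InjOn ⇑(Θ * S - 1) (B : Set M) := by
    intro y₁ hy₁ y₂ hy₂ heq
    rw [← sub_eq_zero]
    refine eq_zero_of_mem_range_sub_one_of_mul_apply_eq_self hc hSΘ hSc hq hΘq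
      (B.sub_mem hy₁ hy₂) ?_
    have := sub_eq_zero.mpr heq
    rwa [← map_sub, LinearMap.sub_apply, Module.End.one_apply, sub_eq_zero] at this
  obtain ⟨y, ⟨k, rfl⟩, hy⟩ :=
    ((Set.toFinite (B : Set M)).injOn_iff_bijOn_of_mapsTo hmaps).mp hinj |>.surjOn
      (mem_range_sub_one_of_geom_sum_apply_eq_zero hc S hd)
  exact ⟨k, hy⟩

end CoprimeEndomorphisms

def Monoid.End.toIntModuleEnd (Q : Type*) [CommGroup Q] :
    Monoid.End Q →* Module.End ℤ (Additive Q) :=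
  (addMonoidEndRingEquivInt _).toMonoidHom.comp (monoidEndToAdditive _).toMonoidHom

theorem Monoid.End.toIntModuleEnd_apply_ofMul {Q : Type*} [CommGroup Q] (φ : Monoid.End Q)
    (y : Q) : Monoid.End.toIntModuleEnd Q φ (Additive.ofMul y) = Additive.ofMul (φ y) :=
  rfl

section Layer

variable {G : Type*} [Group G] {H K : Subgroup G}

abbrev layerCommGroup [K.Normal] (hHK : ∀ a ∈ H, ∀ b ∈ H, a * b * a⁻¹ * b⁻¹ ∈ K) :
    CommGroup (H ⧸ K.subgroupOf H) :=
  { (inferInstance : Group (H ⧸ K.subgroupOf H)) with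
    mul_comm := by
      rintro ⟨a⟩ ⟨b⟩
      refine QuotientGroup.eq.mpr (Subgroup.mem_subgroupOf.mpr ?_)
      simpa [mul_assoc] using hHK _ (inv_mem b.2) _ (inv_mem a.2) }

variable (H K) in
def layerStabilizer : Submonoid (MulAut G) where
  carrier := {α | (∀ x ∈ H, α x ∈ H) ∧ ∀ x ∈ K, α x ∈ K}
  mul_mem' ha hb := ⟨fun x hx => ha.1 _ (hb.1 x hx), fun x hx => ha.2 _ (hb.2 x hx)⟩
  one_mem' := ⟨fun _ hx => hx, fun _ hx => hx⟩

theorem inv_mul_pow_apply_mem {σ : MulAut G} (hσ : ∀ x ∈ H, σ x ∈ H) {h : G}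
    (hh : h⁻¹ * σ h ∈ H) (n : ℕ) : h⁻¹ * (σ ^ n) h ∈ H := by
  induction n with
  | zero => simp
  | succ n ih =>
    have : h⁻¹ * (σ ^ (n + 1)) h = h⁻¹ * σ h * σ (h⁻¹ * (σ ^ n) h) := by
      simp [pow_succ', mul_assoc]
    rw [this]
    exact H.mul_mem hh (hσ _ ih)

theorem mem_layerStabilizer_of_map_eq {σ : MulAut G} (hH : H.map σ.toMonoidHom = H)
    (hK : K.map σ.toMonoidHom = K) : σ ∈ layerStabilizer H K :=
  ⟨fun _ hx => hH ▸ Subgroup.mem_map_of_mem _ hx, fun _ hx => hK ▸ Subgroup.mem_map_of_mem _ hx⟩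

variable [K.Normal]

def layerAction : layerStabilizer H K →* Monoid.End (H ⧸ K.subgroupOf H) where
  toFun α := QuotientGroup.map _ _ ((α.1.toMonoidHom.comp H.subtype).codRestrict H
    fun x => α.2.1 x x.2) fun x hx => Subgroup.mem_subgroupOf.mpr (α.2.2 x hx)
  map_one' := by ext ⟨x⟩; rfl
  map_mul' _ _ := by ext ⟨x⟩; rfl

theorem layerAction_mk (α : layerStabilizer H K) (x : H) :
    layerAction α (x : H ⧸ K.subgroupOf H) = ((⟨α.1 x, α.2.1 x x.2⟩ : H) : H ⧸ K.subgroupOf H) :=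
  rfl

theorem mk_inv_mul_pow_succ_apply {σ : MulAut G} (hσ : σ ∈ layerStabilizer H K) {h : G}
    (hh : h⁻¹ * σ h ∈ H) (n : ℕ) :
    ((⟨h⁻¹ * (σ ^ (n + 1)) h, inv_mul_pow_apply_mem hσ.1 hh (n + 1)⟩ : H) : H ⧸ K.subgroupOf H) =
      (⟨h⁻¹ * (σ ^ n) h, inv_mul_pow_apply_mem hσ.1 hh n⟩ : H) *
        layerAction (⟨σ, hσ⟩ ^ n) (⟨h⁻¹ * σ h, hh⟩ : H) := by
  rw [layerAction_mk, ← QuotientGroup.mk_mul]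
  congr 1
  ext
  simp [pow_succ, mul_assoc]

theorem coprime_card_quotient_subgroupOf [Finite (H ⧸ K.subgroupOf H)] {p c : ℕ}
    (hp : p.Prime) (hcp : c.Coprime p) (hpow : ∀ a ∈ H, ∃ m : ℕ, a ^ p ^ m ∈ K) :
    (Nat.card (H ⧸ K.subgroupOf H)).Coprime c := by
  have := Fact.mk hp
  have hP : IsPGroup p (H ⧸ K.subgroupOf H) := by
    rintro ⟨a⟩
    obtain ⟨m, hm⟩ := hpow a a.2
    exact ⟨m, (QuotientGroup.eq_one_iff _).mpr (Subgroup.mem_subgroupOf.mpr (by simpa using hm))⟩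
  obtain ⟨n, hn⟩ := IsPGroup.iff_card.mp hP
  rw [hn]
  exact Nat.Coprime.pow_left n hcp.symm

variable [H.Normal]

variable (H K) in
def conjLayerStabilizer : G →* layerStabilizer H K :=
  MulAut.conj.codRestrict _ fun g =>
    ⟨fun x hx => by simpa using Subgroup.Normal.conj_mem ‹_› x hx g,
     fun x hx => by simpa using Subgroup.Normal.conj_mem ‹_› x hx g⟩

theorem layerAction_conjLayerStabilizer_eq_one {g : G}
    (hg : ∀ x ∈ H, g * x * g⁻¹ * x⁻¹ ∈ K) : layerAction (conjLayerStabilizer H K g) = 1 := by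
  ext ⟨x⟩
  refine (QuotientGroup.eq.mpr (Subgroup.mem_subgroupOf.mpr ?_)).symm
  simpa [conjLayerStabilizer, MonoidHom.codRestrict, mul_assoc] using
    Subgroup.Normal.conj_mem ‹K.Normal› _ (hg x x.2) (x : G)⁻¹

theorem layerAction_conjLayerStabilizer_eq_one_of_mem {g : G} (hg : g ∈ K) :
    layerAction (conjLayerStabilizer H K g) = 1 :=
  layerAction_conjLayerStabilizer_eq_one fun x _ => by
    simpa [mul_assoc] using K.mul_mem hg (Subgroup.Normal.conj_mem ‹_› _ (inv_mem hg) x)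

theorem commute_layerAction_conjLayerStabilizer (hHK : ∀ a ∈ H, ∀ b ∈ H, a * b * a⁻¹ * b⁻¹ ∈ K)
    {σ : MulAut G} (hσ : σ ∈ layerStabilizer H K) {h : G} (hh : h⁻¹ * σ h ∈ H) :
    Commute (layerAction (⟨σ, hσ⟩ : layerStabilizer H K))
      (layerAction (conjLayerStabilizer H K h⁻¹)) := by
  have hσθ : ⟨σ, hσ⟩ * conjLayerStabilizer H K h⁻¹ =
      conjLayerStabilizer H K (h⁻¹ * σ h)⁻¹ * conjLayerStabilizer H K h⁻¹ * ⟨σ, hσ⟩ := by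
    refine Subtype.ext (MulEquiv.ext fun x => ?_)
    simp [conjLayerStabilizer, MonoidHom.codRestrict, mul_assoc]
  rw [commute_iff_eq, ← map_mul, hσθ, map_mul, map_mul,
    layerAction_conjLayerStabilizer_eq_one fun x hx => hHK _ (inv_mem hh) x hx, one_mul]

theorem twistedConj_inv_mul_apply_mem_iff {σ : MulAut G} (hσ : σ ∈ layerStabilizer H K)
    {h : G} (hh : h⁻¹ * σ h ∈ H) (k : H) :
    (σ k * h * (k : G)⁻¹)⁻¹ * σ (σ k * h * (k : G)⁻¹) ∈ K ↔
      (k : H ⧸ K.subgroupOf H) * layerAction (conjLayerStabilizer H K h⁻¹ * ⟨σ, hσ⟩)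
        ((k : H ⧸ K.subgroupOf H)⁻¹ * layerAction ⟨σ, hσ⟩ k) * ((⟨h⁻¹ * σ h, hh⟩ : H) : _) *
        (layerAction ⟨σ, hσ⟩ k)⁻¹ = 1 := by
  let θσ : layerStabilizer H K := conjLayerStabilizer H K h⁻¹ * ⟨σ, hσ⟩
  let s : H := ⟨σ k, hσ.1 _ k.2⟩
  let w : H := k * ⟨θσ.1 (k⁻¹ * s), θσ.2.1 _ (k⁻¹ * s).2⟩ * ⟨h⁻¹ * σ h, hh⟩ * s⁻¹
  have hw : (w : G) = (σ k * h * (k : G)⁻¹)⁻¹ * σ (σ k * h * (k : G)⁻¹) := by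
    simp [w, s, θσ, conjLayerStabilizer, MonoidHom.codRestrict]
    group
  rw [← hw, ← Subgroup.mem_subgroupOf, ← QuotientGroup.eq_one_iff]
  rfl

end Layer

theorem exists_twistedConj_eq_inv_mul_apply_mem {G : Type*} [Group G] {H K : Subgroup G}
    [K.Normal] [H.Normal] [Finite (H ⧸ K.subgroupOf H)]
    (hHK : ∀ a ∈ H, ∀ b ∈ H, a * b * a⁻¹ * b⁻¹ ∈ K) {c : ℕ}
    (hcard : (Nat.card (H ⧸ K.subgroupOf H)).Coprime c)
    {σ : MulAut G} (hσ : σ ∈ layerStabilizer H K) (hσc : σ ^ c = 1)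
    {h : G} {q : ℕ} (hq : q.Coprime c) (hhq : h ^ q ∈ K) (hh : h⁻¹ * σ h ∈ H) :
    ∃ k h', h = σ k * h' * k⁻¹ ∧ h'⁻¹ * σ h' ∈ K := by
  let := layerCommGroup hHK
  let ι := Monoid.End.toIntModuleEnd (H ⧸ K.subgroupOf H)
  set σ' : layerStabilizer H K := ⟨σ, hσ⟩
  set θ := conjLayerStabilizer H K h⁻¹
  set S := ι (layerAction σ')
  set Θ := ι (layerAction θ)
  set d := Additive.ofMul (((⟨h⁻¹ * σ h, hh⟩ : H) : H ⧸ K.subgroupOf H))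
  have hSc : S ^ c = 1 := by
    rw [← map_pow, ← map_pow, show σ' ^ c = 1 from Subtype.ext hσc, map_one, map_one]
  have hΘq : Θ ^ q = 1 := by
    rw [← map_pow, ← map_pow, ← map_pow,
      layerAction_conjLayerStabilizer_eq_one_of_mem (by rw [inv_pow]; exact inv_mem hhq), map_one]
  have hcomm : Commute S Θ := (commute_layerAction_conjLayerStabilizer hHK hσ hh).map ι
  let f (n : ℕ) : Additive (H ⧸ K.subgroupOf H) :=
    Additive.ofMul ((⟨h⁻¹ * (σ ^ n) h, inv_mul_pow_apply_mem hσ.1 hh n⟩ : H) : _)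
  have hf (n : ℕ) : (S ^ n) d = f (n + 1) - f n := by
    rw [eq_sub_iff_add_eq', ← map_pow, ← map_pow, Monoid.End.toIntModuleEnd_apply_ofMul,
      ← ofMul_mul, ← mk_inv_mul_pow_succ_apply]
  have hd : (∑ i ∈ Finset.range c, S ^ i) d = 0 := by
    rw [LinearMap.sum_apply]
    simp only [hf]
    rw [Finset.sum_range_sub]
    simp [f, hσc]
  obtain ⟨k, hk⟩ := exists_mul_sub_one_mul_sub_one_apply_eq (M := Additive (H ⧸ K.subgroupOf H))
    hcard hcomm hSc hq hΘq (d := -d) (by rw [map_neg, hd, neg_zero])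
  obtain ⟨k₀, hk₀⟩ := QuotientGroup.mk_surjective k.toMul
  obtain rfl : k = Additive.ofMul (k₀ : H ⧸ K.subgroupOf H) := by rw [hk₀]; rfl
  refine ⟨(k₀ : G)⁻¹, σ k₀ * h * (k₀ : G)⁻¹, by simp [mul_assoc], ?_⟩
  rw [twistedConj_inv_mul_apply_mem_iff hσ hh, ← Additive.ofMul.injective.eq_iff]
  calc _ = ((Θ * S - 1) * (S - 1)) (Additive.ofMul (k₀ : H ⧸ K.subgroupOf H)) + d := by
        simp only [ofMul_mul, ofMul_inv, ← Monoid.End.toIntModuleEnd_apply_ofMul]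
        simp only [map_mul, Module.End.mul_apply, LinearMap.sub_apply, map_neg, map_add,
          map_sub, Module.End.one_apply]
        abel
    _ = Additive.ofMul 1 := by rw [hk, neg_add_cancel, ofMul_one]

theorem exists_twistedConj_eq_of_forall_mem_nhds {Γ : Type*} [Group Γ] [TopologicalSpace Γ]
    [ContinuousMul Γ] [ContinuousInv Γ] [T2Space Γ] [CompactSpace Γ] {σ : Γ → Γ}
    (hσ : Continuous σ) {g : Γ}
    (happrox : ∀ U ∈ 𝓝 (1 : Γ), ∃ k h, g = σ k * h * k⁻¹ ∧ h⁻¹ * σ h ∈ U) :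
    ∃ k h, σ h = h ∧ g = σ k * h * k⁻¹ := by
  let C : Set (Γ × Γ) := {z | g = σ z.1 * z.2 * z.1⁻¹}
  have hC : IsClosed C := isClosed_eq continuous_const (by fun_prop)
  let F (z : Γ × Γ) : Γ := z.2⁻¹ * σ z.2
  have h1 : (1 : Γ) ∈ closure (F '' C) := mem_closure_iff_nhds.mpr fun U hU => by
    obtain ⟨k, h, hg, hU'⟩ := happrox U hU
    exact ⟨_, hU', (k, h), hg, rfl⟩
  rw [(hC.isCompact.image (by fun_prop)).isClosed.closure_eq] at h1
  obtain ⟨⟨k, h⟩, hg, hkh⟩ := h1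
  exact ⟨k, h, (inv_mul_eq_one.mp hkh).symm, hg⟩

theorem exists_pow_pow_mem {Γ : Type*} [Group Γ] {p : ℕ} {N : ℕ → Subgroup Γ}
    (hN1 : N 1 = ⊤) (hpprim : ∀ n : ℕ, 1 ≤ n → ∀ a ∈ N n, ∃ m : ℕ, a ^ p ^ m ∈ N (n + 1))
    (x : Γ) (n : ℕ) (hn : 1 ≤ n) : ∃ t : ℕ, x ^ p ^ t ∈ N n := by
  induction n, hn using Nat.le_induction with
  | base => exact ⟨0, by simp [hN1]⟩
  | succ n hn ih =>
    obtain ⟨t, ht⟩ := ih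
    obtain ⟨m, hm⟩ := hpprim n hn _ ht
    exact ⟨t + m, by rwa [pow_add, pow_mul]⟩

theorem finite_quotient_subgroupOf_of_isOpen {Γ : Type*} [Group Γ] [TopologicalSpace Γ]
    [SeparatelyContinuousMul Γ] [CompactSpace Γ] (H : Subgroup Γ) {K : Subgroup Γ}
    (hK : IsOpen (K : Set Γ)) : Finite (H ⧸ K.subgroupOf H) :=
  have := K.quotient_finite_of_isOpen hK
  have := Subgroup.finiteIndex_of_finite_quotient (H := K)
  inferInstance

theorem stmt_9_general (p : ℕ) (hp : p.Prime) (c : ℕ) (hcp : Nat.Coprime c p)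
    {Γ : Type*} [Group Γ] [TopologicalSpace Γ] [IsTopologicalGroup Γ]
    [T2Space Γ] [CompactSpace Γ]
    (N : ℕ → Subgroup Γ)
    (hN1 : N 1 = ⊤)
    (hnormal : ∀ n : ℕ, 1 ≤ n → (N n).Normal)
    (hbasis : (𝓝 (1 : Γ)).HasBasis (fun n : ℕ => 1 ≤ n) (fun n => (N n : Set Γ)))
    (hab : ∀ n : ℕ, 1 ≤ n → ∀ a ∈ N n, ∀ b ∈ N n, a * b * a⁻¹ * b⁻¹ ∈ N (n + 1))
    (hpprim : ∀ n : ℕ, 1 ≤ n → ∀ a ∈ N n, ∃ m : ℕ, a ^ p ^ m ∈ N (n + 1))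
    (σ : MulAut Γ) (hcont : Continuous ⇑σ) (hσc : σ ^ c = 1)
    (hσN : ∀ n : ℕ, 1 ≤ n → Subgroup.map σ.toMonoidHom (N n) = N n) :
    ∀ g : Γ, ∃ k h : Γ, σ h = h ∧ g = σ k * h * k⁻¹ := by
  have step (n : ℕ) (hn : 1 ≤ n) (h : Γ) (hh : h⁻¹ * σ h ∈ N n) :
      ∃ k h', h = σ k * h' * k⁻¹ ∧ h'⁻¹ * σ h' ∈ N (n + 1) := by
    have := hnormal n hn
    have := hnormal (n + 1) (by omega)
    have := finite_quotient_subgroupOf_of_isOpen (N n)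
      ((N (n + 1)).isOpen_of_mem_nhds (hbasis.mem_of_mem (by omega)))
    obtain ⟨t, ht⟩ := exists_pow_pow_mem hN1 hpprim h (n + 1) (by omega)
    exact exists_twistedConj_eq_inv_mul_apply_mem (hab n hn)
      (coprime_card_quotient_subgroupOf hp hcp (hpprim n hn))
      (mem_layerStabilizer_of_map_eq (hσN n hn) (hσN (n + 1) (by omega))) hσc
      (Nat.Coprime.pow_left t hcp.symm) ht hh
  have approx (n : ℕ) (hn : 1 ≤ n) (g : Γ) : ∃ k h, g = σ k * h * k⁻¹ ∧ h⁻¹ * σ h ∈ N n := by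
    induction n, hn using Nat.le_induction with
    | base => exact ⟨1, g, by simp, by simp [hN1]⟩
    | succ n hn ih =>
      obtain ⟨k, h, rfl, hh⟩ := ih
      obtain ⟨k', h', rfl, hh'⟩ := step n hn h hh
      exact ⟨k * k', h', by simp [mul_assoc], hh'⟩
  intro g
  refine exists_twistedConj_eq_of_forall_mem_nhds hcont fun U hU => ?_
  obtain ⟨n, hn, hNU⟩ := hbasis.mem_iff.mp hU
  obtain ⟨k, h, hg, hh⟩ := approx n hn g
  exact ⟨k, h, hg, hNU hh⟩

/-- Twisted conjugacy in a pro-`p` group: if `σ` is a continuous automorphism of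
order dividing `c` (coprime to `p`) of a compact Hausdorff group `Γ` with a
`σ`-stable neighbourhood basis of normal subgroups `Γ = N 1 ⊇ N 2 ⊇ ⋯` whose
successive quotients are abelian `p`-primary, then every `g ∈ Γ` can be written
`g = σ k * h * k⁻¹` with `σ h = h`. -/
theorem stmt_9 (p : ℕ) (hp : p.Prime) (c : ℕ) (hc : 1 ≤ c) (hcp : Nat.Coprime c p)
    {Γ : Type*} [Group Γ] [TopologicalSpace Γ] [IsTopologicalGroup Γ]
    [T2Space Γ] [CompactSpace Γ]
    (N : ℕ → Subgroup Γ)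
    (hN1 : N 1 = ⊤)
    (hdec : ∀ n : ℕ, 1 ≤ n → N (n + 1) ≤ N n)
    (hnormal : ∀ n : ℕ, 1 ≤ n → (N n).Normal)
    (hbasis : (𝓝 (1 : Γ)).HasBasis (fun n : ℕ => 1 ≤ n) (fun n => (N n : Set Γ)))
    (hab : ∀ n : ℕ, 1 ≤ n → ∀ a ∈ N n, ∀ b ∈ N n, a * b * a⁻¹ * b⁻¹ ∈ N (n + 1))
    (hpprim : ∀ n : ℕ, 1 ≤ n → ∀ a ∈ N n, ∃ m : ℕ, a ^ p ^ m ∈ N (n + 1))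
    (σ : MulAut Γ) (hcont : Continuous ⇑σ) (hσc : σ ^ c = 1)
    (hσN : ∀ n : ℕ, 1 ≤ n → Subgroup.map σ.toMonoidHom (N n) = N n) :
    ∀ g : Γ, ∃ k h : Γ, σ h = h ∧ g = σ k * h * k⁻¹ :=
  stmt_9_general p hp c hcp N hN1 hnormal hbasis hab hpprim σ hcont hσc hσN
end
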